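/- Let μ_1,…,μ_n be probability measures on ℝ^n and suppose G ⊆ supp μ_1 × ⋯ × supp μ_n is a Borel set with (μ_1×⋯×μ_n)(G) ≥ c > 0 such that for every (x_1,…,x_n) ∈ G, every δ > 0 and every j, μ_j of the δ-neighborhood of the affine span of x_1,…,x_n is at most K·δ^σ (with σ, K > 0). Then the flats W_j = aff(supp μ_j), j = 1,…,n, form an NC collection in ℝ^n: for every finite collection of affine flats U_1,…,U_t with ⋃_{j=1}^n W_j ⊆ ⋃_{i=1}^t U_i one has Σ_{i=1}^t dim U_i ≥ n. -/

import Mathlib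

open MeasureTheory Metric Set

noncomputable section

/-- `ℝⁿ` as a Euclidean space. -/
abbrev Euc (n : ℕ) : Type := EuclideanSpace ℝ (Fin n)

/-- The topological support of a measure on `ℝⁿ`. -/
def msupp {n : ℕ} (μ : Measure (Euc n)) : Set (Euc n) :=
  {x | ∀ r : ℝ, 0 < r → 0 < μ (ball x r)}

/-- `μ` is a `(C, s)`-Frostman measure. -/
def Frostman {n : ℕ} (μ : Measure (Euc n)) (C s : ℝ) : Prop :=
  ∀ (x : Euc n) (r : ℝ), 0 < r → μ (ball x r) ≤ ENNReal.ofReal (C * r ^ s)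

/-- `μ` is irreducible in the affine subspace `V`. -/
def IrreducibleIn {n : ℕ} (μ : Measure (Euc n)) (V : AffineSubspace ℝ (Euc n)) : Prop :=
  ∀ V' : AffineSubspace ℝ (Euc n), V' < V → μ (V' : Set (Euc n)) = 0

/-- `μ` is `(w, τ)`-irreducible in the affine subspace `V`. -/
def WTIrreducible {n : ℕ} (μ : Measure (Euc n)) (V : AffineSubspace ℝ (Euc n)) (w τ : ℝ) : Prop :=
  ∀ H : AffineSubspace ℝ (Euc n), H < V →
    μ (thickening w (H : Set (Euc n))) ≤ ENNReal.ofReal τ * μ (closedBall 0 1)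

/-- Measures `μ i` are in `C`-good position: supports in the closed unit ball, and the
product of the supports is `1/C`-separated from the affinely dependent tuples. -/
def GoodPosition {n : ℕ} {ι : Type} [Fintype ι] (μ : ι → Measure (Euc n)) (C : ℝ) : Prop :=
  (∀ i, msupp (μ i) ⊆ closedBall 0 1) ∧
  ∀ x : ι → Euc n, (∀ i, x i ∈ msupp (μ i)) →
    ∀ y : ι → Euc n, ¬ AffineIndependent ℝ y → 1 / C ≤ dist x y

/-- The measures `μ i`, `i : ι`, span `(σ, K, c)`-thin `(|ι| - 1)`-planes. -/
def SpansThin {n : ℕ} {ι : Type} [Fintype ι] (μ : ι → Measure (Euc n)) (σ K c : ℝ) : Prop :=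
  ∃ G : Set (ι → Euc n), MeasurableSet G ∧
    G ⊆ Set.univ.pi (fun i => msupp (μ i)) ∧
    ENNReal.ofReal c ≤ Measure.pi μ G ∧
    ∀ x ∈ G, ∀ δ : ℝ, 0 < δ → ∀ j : ι,
      μ j (thickening δ ((affineSpan ℝ (Set.range x) : AffineSubspace ℝ (Euc n)) : Set (Euc n))) ≤
        ENNReal.ofReal (K * δ ^ σ)

/-- A set `X ⊆ ℝⁿ` is non-concentrated (NC). -/
def NCSet {n : ℕ} (X : Set (Euc n)) : Prop :=
  ∀ (r : ℕ) (F : Fin r → AffineSubspace ℝ (Euc n)),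
    (∑ i, Module.finrank ℝ (F i).direction) + 1 ≤ n →
    dimH (X \ ⋃ i, (F i : Set (Euc n))) = dimH X

/-- A collection of affine flats is non-concentrated (NC). -/
def NCFlats {n m : ℕ} (V : Fin m → AffineSubspace ℝ (Euc n)) : Prop :=
  ∀ (r : ℕ) (F : Fin r → AffineSubspace ℝ (Euc n)),
    (⋃ j, (V j : Set (Euc n))) ⊆ (⋃ i, (F i : Set (Euc n))) →
    n ≤ ∑ i, Module.finrank ℝ (F i).direction

/-!
For `x ∈ G` the thinness bound, letting `δ → 0`, gives `μ j (aff x) = 0`. By Fubini, splitting off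
the `j`-th point, the tuples of `G` whose `j`-th point lies on the flat of the others are null, so
some `x ∈ G` is affinely independent. Each `aff (supp μ j)` is a nonempty flat covered by finitely
many flats, hence lies in a single `U (g j)`. If some `U i` received more than `dim U i` indices,
the independent points `x j` with `g j = i` would span `U i`, putting `supp μ j` inside the null
flat `aff x`. Hence `n = ∑ i, #(g⁻¹ i) ≤ ∑ i, dim U i`.
-/

section AffineGeometry

open Finset

variable {k V P : Type*} [Field k] [AddCommGroup V] [Module k V] [AddTorsor V P]

theorem AffineSubspace.lineMap_mem_of_lineMap_mem (U : AffineSubspace k P) {p q : P} {c₁ c₂ : k}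
    (hne : c₁ ≠ c₂) (h₁ : AffineMap.lineMap p q c₁ ∈ U) (h₂ : AffineMap.lineMap p q c₂ ∈ U)
    (c : k) : AffineMap.lineMap p q c ∈ U := by
  have hc : c = AffineMap.lineMap c₁ c₂ ((c - c₁) / (c₂ - c₁)) := by
    rw [AffineMap.lineMap_apply_ring', div_mul_cancel₀ _ (sub_ne_zero.2 hne.symm),
      sub_add_cancel]
  rw [hc, AffineMap.apply_lineMap]
  exact AffineMap.lineMap_mem _ h₁ h₂

theorem AffineSubspace.exists_le_of_subset_biUnion [Infinite k] {ι : Type*}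
    (U : ι → AffineSubspace k P) {W : AffineSubspace k P} (hW : (W : Set P).Nonempty)
    (s : Finset ι) (hcover : (W : Set P) ⊆ ⋃ i ∈ s, (U i : Set P)) : ∃ i ∈ s, W ≤ U i := by
  classical
  induction s using Finset.induction_on with
  | empty => simpa using hcover hW.some_mem
  | insert a s _ ih =>
    by_cases ha : W ≤ U a
    · exact ⟨a, mem_insert_self a s, ha⟩
    obtain ⟨q, hqW, hqU⟩ := SetLike.not_le_iff_exists.1 ha
    suffices (W : Set P) ⊆ ⋃ i ∈ s, (U i : Set P) by
      obtain ⟨i, hi, hWU⟩ := ih this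
      exact ⟨i, mem_insert_of_mem hi, hWU⟩
    intro w hw
    -- The line through `q` and `w` meets `U a` at most once, so some other `U i` contains
    -- two of its points, hence all of it.
    set line : k → P := ⇑(AffineMap.lineMap (k := k) q w)
    have hline_a : {c | line c ∈ U a}.Subsingleton := fun c₁ h₁ c₂ h₂ => by
      by_contra hne
      exact hqU (by simpa [line] using (U a).lineMap_mem_of_lineMap_mem hne h₁ h₂ 0)
    have hline_s : {c | line c ∈ U a}ᶜ ⊆ ⋃ i ∈ s, {c | line c ∈ U i} := fun c hc => by
      simp only [Set.mem_compl_iff, Set.mem_ofPred_eq, line] at hc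
      simpa [hc] using hcover (AffineMap.lineMap_mem c hqW hw)
    obtain ⟨i, hi, hinf⟩ : ∃ i ∈ s, {c | line c ∈ U i}.Infinite := by
      by_contra! hfin
      exact ((hline_a.finite.infinite_compl).mono hline_s) (s.finite_toSet.biUnion hfin)
    obtain ⟨c₁, h₁, c₂, h₂, hne⟩ := hinf.nontrivial
    exact Set.mem_biUnion hi (by simpa [line] using (U i).lineMap_mem_of_lineMap_mem hne h₁ h₂ 1)

end AffineGeometry

section AffineIndependence

variable {k V P ι : Type*} [Field k] [AddCommGroup V] [Module k V] [AddTorsor V P]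

theorem affineIndependent_of_forall_notMem_affineSpan {p : ι → P}
    (h : ∀ i, p i ∉ affineSpan k (p '' {i}ᶜ)) : AffineIndependent k p := by
  rcases isEmpty_or_nonempty ι with hι | ⟨⟨i₀⟩⟩
  · exact affineIndependent_of_subsingleton k p
  rw [affineIndependent_iff_linearIndependent_vsub k p i₀, linearIndependent_iff_notMem_span]
  rintro ⟨i, hi⟩ hspan
  refine h i ?_
  rw [← vsub_vadd (p i) (p i₀)]
  refine AffineSubspace.vadd_mem_of_mem_direction ?_ (mem_affineSpan k ⟨i₀, Ne.symm hi, rfl⟩)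
  rw [direction_affineSpan]
  refine Submodule.span_le.2 ?_ hspan
  rintro _ ⟨⟨l, hl⟩, hl', rfl⟩
  have hli : l ≠ i := fun h => by simp [h] at hl'
  exact vsub_mem_vectorSpan k ⟨l, hli, rfl⟩ ⟨i₀, Ne.symm hi, rfl⟩

theorem AffineIndependent.le_affineSpan_of_finrank_lt_card {p : ι → P}
    (hp : AffineIndependent k p) {s : Finset ι} {U : AffineSubspace k P}
    [FiniteDimensional k U.direction] (hsU : ∀ j ∈ s, p j ∈ U)
    (hcard : Module.finrank k U.direction < s.card) : U ≤ affineSpan k (Set.range p) := by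
  set q : s → P := fun j => p j
  have hq : AffineIndependent k q := hp.comp_embedding (Function.Embedding.subtype _)
  have hle : affineSpan k (Set.range q) ≤ U :=
    affineSpan_le.2 (Set.range_subset_iff.2 fun j => hsU j j.2)
  have hcard_le : Fintype.card s ≤ Module.finrank k U.direction + 1 := by
    refine hq.card_le_finrank_succ.trans (Nat.succ_le_succ (Submodule.finrank_mono ?_))
    rw [← direction_affineSpan]
    exact AffineSubspace.direction_le hle
  rw [← hq.affineSpan_eq_of_le_of_card_eq_finrank_add_one hle (by simp at hcard_le ⊢; omega)]
  exact affineSpan_mono k (Set.range_comp_subset_range _ p)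

end AffineIndependence

theorem ENNReal.eq_zero_of_forall_le_mul_rpow {a : ENNReal} {K σ : ℝ} (hσ : 0 < σ)
    (h : ∀ δ : ℝ, 0 < δ → a ≤ ENNReal.ofReal (K * δ ^ σ)) : a = 0 := by
  have hlim : Filter.Tendsto (fun δ : ℝ => ENNReal.ofReal (K * δ ^ σ))
      (nhdsWithin 0 (Set.Ioi 0)) (nhds 0) := by
    have := ((Real.continuousAt_rpow_const 0 σ (Or.inr hσ.le)).const_mul K).tendsto
    rw [Real.zero_rpow hσ.ne', mul_zero] at this
    simpa using (ENNReal.tendsto_ofReal this).mono_left nhdsWithin_le_nhds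
  exact nonpos_iff_eq_zero.1 (ge_of_tendsto hlim (eventually_nhdsWithin_of_forall h))

theorem MeasureTheory.measure_eq_zero_of_forall_thickening_le {X : Type*} [PseudoMetricSpace X]
    [MeasurableSpace X] (ν : Measure X) (s : Set X) {K σ : ℝ} (hσ : 0 < σ)
    (h : ∀ δ : ℝ, 0 < δ → ν (thickening δ s) ≤ ENNReal.ofReal (K * δ ^ σ)) : ν s = 0 :=
  ENNReal.eq_zero_of_forall_le_mul_rpow hσ fun δ hδ =>
    (measure_mono (self_subset_thickening hδ s)).trans (h δ hδ)

theorem MeasureTheory.Measure.prod_apply_le_of_forall_slice_le {α β : Type*} [MeasurableSpace α]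
    [MeasurableSpace β] (μ : Measure α) (ν : Measure β) [SFinite μ] [IsProbabilityMeasure ν]
    {s : Set (α × β)} (hs : MeasurableSet s) {ε : ENNReal}
    (h : ∀ b, μ ((·, b) ⁻¹' s) ≤ ε) : μ.prod ν s ≤ ε :=
  calc μ.prod ν s = ∫⁻ b, μ ((·, b) ⁻¹' s) ∂ν := Measure.prod_apply_symm hs
    _ ≤ ∫⁻ _, ε ∂ν := lintegral_mono h
    _ = ε := by simp

section ThinFlats

variable {E : Type*} [NormedAddCommGroup E] [NormedSpace ℝ E]

theorem isOpen_setOf_mem_thickening_affineSpan {ι : Type*} [Fintype ι] (δ : ℝ) :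
    IsOpen {p : E × (ι → E) | p.1 ∈ thickening δ (affineSpan ℝ (Set.range p.2) : Set E)} := by
  rw [isOpen_iff_mem_nhds]
  rintro ⟨a, y⟩ hay
  obtain ⟨z, hz, hdist⟩ := mem_thickening_iff.1 hay
  obtain ⟨w, hw, rfl⟩ := eq_affineCombination_of_mem_affineSpan_of_fintype hz
  -- The combination of the moving points with the same weights stays in their span.
  have hcont : Continuous fun q : E × (ι → E) => dist q.1 (∑ i, w i • q.2 i) := by fun_prop
  rw [Finset.affineCombination_eq_linear_combination _ _ _ hw] at hdist
  filter_upwards [(isOpen_lt hcont continuous_const).mem_nhds hdist] with q hq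
  refine mem_thickening_iff.2 ⟨_, affineCombination_mem_affineSpan hw q.2, ?_⟩
  rwa [Finset.affineCombination_eq_linear_combination _ _ _ hw]

end ThinFlats

section Genericity

variable {E : Type*} [NormedAddCommGroup E] [NormedSpace ℝ E] [MeasurableSpace E] [BorelSpace E]
  [SecondCountableTopology E]

theorem measure_pi_inter_setOf_mem_affineSpan_eq_zero {n : ℕ} (μ : Fin (n + 1) → Measure E)
    [∀ i, IsProbabilityMeasure (μ i)] {σ K : ℝ} (hσ : 0 < σ) {G : Set (Fin (n + 1) → E)}
    (hG : MeasurableSet G)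
    (hthin : ∀ x ∈ G, ∀ δ : ℝ, 0 < δ → ∀ j,
      μ j (thickening δ (affineSpan ℝ (Set.range x) : Set E)) ≤ ENNReal.ofReal (K * δ ^ σ))
    (j : Fin (n + 1)) :
    Measure.pi μ (G ∩ {x | x j ∈ affineSpan ℝ (x '' {j}ᶜ)}) = 0 := by
  refine ENNReal.eq_zero_of_forall_le_mul_rpow (K := K) hσ fun δ hδ => ?_
  set e := MeasurableEquiv.piFinSuccAbove (fun _ => E) j
  -- Split off the `j`-th point: the bad set lies in `e ⁻¹' T`, and the slices of `T` are thin.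
  set T : Set (E × (Fin n → E)) := {p | j.insertNth p.1 p.2 ∈ G ∧
    p.1 ∈ thickening δ (affineSpan ℝ (Set.range p.2) : Set E)}
  have hT : MeasurableSet T :=
    (e.symm.measurable hG).inter (isOpen_setOf_mem_thickening_affineSpan δ).measurableSet
  have hsub : G ∩ {x | x j ∈ affineSpan ℝ (x '' {j}ᶜ)} ⊆ e ⁻¹' T := by
    rintro x ⟨hxG, hx⟩
    refine ⟨by simpa [e] using hxG, ?_⟩
    rw [Set.mem_ofPred_eq, ← Fin.range_succAbove, ← Set.range_comp] at hx
    exact self_subset_thickening hδ _ hx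
  have hslice : ∀ y, μ j ((·, y) ⁻¹' T) ≤ ENNReal.ofReal (K * δ ^ σ) := by
    intro y
    rcases ((·, y) ⁻¹' T).eq_empty_or_nonempty with h | ⟨a, ha, -⟩
    · simp [h]
    refine (measure_mono fun b hb => ?_).trans (hthin _ ha δ hδ j)
    refine thickening_subset_of_subset δ (affineSpan_mono ℝ ?_) hb.2
    show Set.range y ⊆ Set.range (j.insertNth a y)
    simpa using Set.range_comp_subset_range j.succAbove (j.insertNth a y)
  calc Measure.pi μ (G ∩ {x | x j ∈ affineSpan ℝ (x '' {j}ᶜ)})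
      ≤ Measure.pi μ (e ⁻¹' T) := measure_mono hsub
    _ = (μ j).prod (Measure.pi fun i => μ (j.succAbove i)) T :=
      (measurePreserving_piFinSuccAbove μ j).measure_preimage hT.nullMeasurableSet
    _ ≤ ENNReal.ofReal (K * δ ^ σ) := Measure.prod_apply_le_of_forall_slice_le _ _ hT hslice

theorem ae_affineIndependent_of_mem {n : ℕ} (μ : Fin (n + 1) → Measure E)
    [∀ i, IsProbabilityMeasure (μ i)] {σ K : ℝ} (hσ : 0 < σ) {G : Set (Fin (n + 1) → E)}
    (hG : MeasurableSet G)
    (hthin : ∀ x ∈ G, ∀ δ : ℝ, 0 < δ → ∀ j,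
      μ j (thickening δ (affineSpan ℝ (Set.range x) : Set E)) ≤ ENNReal.ofReal (K * δ ^ σ)) :
    ∀ᵐ x ∂Measure.pi μ, x ∈ G → AffineIndependent ℝ x := by
  have hnull := measure_iUnion_null (measure_pi_inter_setOf_mem_affineSpan_eq_zero μ hσ hG hthin)
  filter_upwards [measure_eq_zero_iff_ae_notMem.1 hnull] with x hx hxG
  exact affineIndependent_of_forall_notMem_affineSpan fun j hj =>
    hx (Set.mem_iUnion.2 ⟨j, hxG, hj⟩)

end Genericity

theorem msupp_eq_support {n : ℕ} (μ : Measure (Euc n)) : msupp μ = μ.support := by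
  ext x
  exact nhds_basis_ball.mem_measureSupport.symm

theorem ae_mem_msupp {n : ℕ} (μ : Measure (Euc n)) : ∀ᵐ x ∂μ, x ∈ msupp μ := by
  rw [msupp_eq_support]
  exact Measure.support_mem_ae

theorem not_msupp_subset_of_measure_eq_zero {n : ℕ} (μ : Measure (Euc n)) [NeZero μ]
    {s : Set (Euc n)} (hs : μ s = 0) : ¬ msupp μ ⊆ s := fun hsub =>
  have ⟨_, hx, hxs⟩ := ((ae_mem_msupp μ).and (measure_eq_zero_iff_ae_notMem.1 hs)).exists
  hxs (hsub hx)

theorem stmt_11_general {n : ℕ} (μ : Fin n → Measure (Euc n))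
    (hprob : ∀ i, IsProbabilityMeasure (μ i))
    (σ K c : ℝ) (hσ : 0 < σ) (hc : 0 < c)
    (G : Set (Fin n → Euc n)) (hGmeas : MeasurableSet G)
    (hGsub : G ⊆ Set.univ.pi fun i => msupp (μ i))
    (hGc : ENNReal.ofReal c ≤ Measure.pi μ G)
    (hthin : ∀ x ∈ G, ∀ δ : ℝ, 0 < δ → ∀ j,
      μ j (thickening δ
          ((affineSpan ℝ (Set.range x) : AffineSubspace ℝ (Euc n)) : Set (Euc n))) ≤
        ENNReal.ofReal (K * δ ^ σ)) :
    ∀ (t : ℕ) (U : Fin t → AffineSubspace ℝ (Euc n)),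
      (⋃ j, ((affineSpan ℝ (msupp (μ j)) : AffineSubspace ℝ (Euc n)) : Set (Euc n))) ⊆
        (⋃ i, (U i : Set (Euc n))) →
      n ≤ ∑ i, Module.finrank ℝ (U i).direction := by
  intro t U hcover
  cases n with
  | zero => exact Nat.zero_le _
  | succ n =>
  have hG : Measure.pi μ G ≠ 0 := ((ENNReal.ofReal_pos.2 hc).trans_le hGc).ne'
  obtain ⟨x, hxG, hx⟩ := Measure.exists_mem_of_measure_ne_zero_of_ae hG
    ((ae_restrict_iff' hGmeas).2 (ae_affineIndependent_of_mem μ hσ hGmeas hthin))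
  have hW : ∀ j, ∃ i ∈ Finset.univ, affineSpan ℝ (msupp (μ j)) ≤ U i := fun j =>
    AffineSubspace.exists_le_of_subset_biUnion U
      ((ae_mem_msupp (μ j)).exists.imp fun _ h => subset_affineSpan ℝ _ h) Finset.univ
      (by simpa using (Set.subset_iUnion _ j).trans hcover)
  choose g _ hg using hW
  have hxU : ∀ j, x j ∈ U (g j) := fun j => hg j (subset_affineSpan ℝ _ (hGsub hxG j trivial))
  have hfiber : ∀ i, (Finset.univ.filter (g · = i)).card ≤ Module.finrank ℝ (U i).direction :=
      fun i => by
    by_contra! hlt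
    obtain ⟨j, hj⟩ := Finset.card_pos.1 (Nat.zero_lt_of_lt hlt)
    have hUx := hx.le_affineSpan_of_finrank_lt_card
      (fun j hj => (Finset.mem_filter.1 hj).2 ▸ hxU j) hlt
    refine not_msupp_subset_of_measure_eq_zero (μ j)
      (measure_eq_zero_of_forall_thickening_le _ _ hσ fun δ hδ => hthin x hxG δ hδ j) ?_
    rw [← (Finset.mem_filter.1 hj).2] at hUx
    exact (subset_affineSpan ℝ _).trans ((hg j).trans hUx)
  calc n + 1 = ∑ i, (Finset.univ.filter (g · = i)).card := by
        simpa using Finset.card_eq_sum_card_fiberwise (f := g) (s := Finset.univ)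
          (t := Finset.univ) (by simp)
    _ ≤ ∑ i, Module.finrank ℝ (U i).direction := Finset.sum_le_sum fun i _ => hfiber i

/-- Thin hyperplanes imply NC flats. If `μ 1, …, μ n` admit a
`(σ, K, c)`-thin hyperplanes graph `G` with `c > 0`, then the flats `W j = aff (supp (μ j))`
form an NC collection in `ℝⁿ`. -/
theorem stmt_11 {n : ℕ} (μ : Fin n → Measure (Euc n))
    (hprob : ∀ i, IsProbabilityMeasure (μ i))
    (σ K c : ℝ) (hσ : 0 < σ) (hK : 0 < K) (hc : 0 < c)
    (G : Set (Fin n → Euc n)) (hGmeas : MeasurableSet G)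
    (hGsub : G ⊆ Set.univ.pi fun i => msupp (μ i))
    (hGc : ENNReal.ofReal c ≤ Measure.pi μ G)
    (hthin : ∀ x ∈ G, ∀ δ : ℝ, 0 < δ → ∀ j,
      μ j (thickening δ
          ((affineSpan ℝ (Set.range x) : AffineSubspace ℝ (Euc n)) : Set (Euc n))) ≤
        ENNReal.ofReal (K * δ ^ σ)) :
    ∀ (t : ℕ) (U : Fin t → AffineSubspace ℝ (Euc n)),
      (⋃ j, ((affineSpan ℝ (msupp (μ j)) : AffineSubspace ℝ (Euc n)) : Set (Euc n))) ⊆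
        (⋃ i, (U i : Set (Euc n))) →
      n ≤ ∑ i, Module.finrank ℝ (U i).direction :=
  stmt_11_general μ hprob σ K c hσ hc G hGmeas hGsub hGc hthin
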